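/- Let H = H_{[0,N]} be a Jacobi matrix with eigenvalues λ_0 < λ_1 < ... < λ_N, and let P̂_k be the orthonormal polynomials defined by b_k P̂_{k+1}(x) = (x − a_k) P̂_k(x) − b_{k−1} P̂_{k−1}(x), P̂_{−1}=0, P̂_0=1, b_{−1}=b_N=1. Then there exist φ ∈ ℝ and T > 0 with e^{iφ} e^{iTH} e_0 = e_N (perfect state transfer from the first to the last standard basis vector) if and only if (i) e^{i(Tλ_k + φ)} = (−1)^{N+k} for all k, and (ii) P̂_N(λ_k) = (−1)^{N+k} for all k. -/

import Mathlib

open Polynomial Matrix NormedSpace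

/-- The `(N+1) × (N+1)` Jacobi matrix with diagonal `a` and off-diagonal `b`. -/
def jacobiMatrix (N : ℕ) (a b : ℕ → ℝ) : Matrix (Fin (N + 1)) (Fin (N + 1)) ℝ :=
  Matrix.of fun i j =>
    if (i : ℕ) = (j : ℕ) then a i
    else if (i : ℕ) + 1 = (j : ℕ) then b i
    else if (j : ℕ) + 1 = (i : ℕ) then b j
    else 0

/-- The orthonormal polynomials `P̂_k` of the Jacobi matrix:
    `P̂_{-1} = 0`, `P̂_0 = 1`, `b_k P̂_{k+1}(x) = (x - a_k) P̂_k(x) - b_{k-1} P̂_{k-1}(x)`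
    with `b_{-1} = 1`. -/
noncomputable def phat (a b : ℕ → ℝ) : ℕ → Polynomial ℝ
  | 0 => 1
  | 1 => C (b 0)⁻¹ * (X - C (a 0))
  | (k + 2) => C (b (k + 1))⁻¹ *
      ((X - C (a (k + 1))) * phat a b (k + 1) - C (b k) * phat a b k)

/-!
The vectors `v(x) = (P̂_0(x), …, P̂_N(x))` satisfy `H v(x) = x v(x) - b_N P̂_{N+1}(x) e_N`, and an
eigenvector of `H` is determined by its first entry through the three-term recurrence. Hence the
eigenvalues `λ_k` are the zeros of `P̂_{N+1}`, and the matrix `V` with columns `v(λ_k)` diagonalises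
`H`. As `H` is symmetric, `Vᵀ e^{iTH} = diag(e^{iTλ_k}) Vᵀ`; since `V_{0k} = 1` and
`V_{Nk} = P̂_N(λ_k)`, applying `Vᵀ` turns perfect state transfer into `e^{i(Tλ_k + φ)} = P̂_N(λ_k)`
for all `k`. The left side has modulus one, and `P̂_N(λ_k)` has sign `(-1)^{N+k}`: by
Christoffel–Darboux `b_N P̂_{N+1}'(λ_k) P̂_N(λ_k) = ∑_j P̂_j(λ_k)² > 0`, while `P̂_{N+1}` is a
positive multiple of `∏_j (x - λ_j)`, whose derivative at `λ_k` has sign `(-1)^{N-k}`.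
-/

namespace Matrix

variable {m 𝔸 : Type*} [Fintype m] [DecidableEq m] [NormedCommRing 𝔸] [NormedAlgebra ℚ 𝔸]
  [CompleteSpace 𝔸]

theorem exp_mul_eq_mul_diagonal_exp {A U : Matrix m m 𝔸} {d : m → 𝔸} (hU : IsUnit U)
    (h : A * U = U * diagonal d) : exp A * U = U * diagonal (exp d) := by
  have hdet := (isUnit_iff_isUnit_det U).mp hU
  have hA : A = U * diagonal d * U⁻¹ := by simp [← h, Matrix.mul_assoc, mul_nonsing_inv _ hdet]
  rw [hA, exp_conj _ _ hU, exp_diagonal, Matrix.mul_assoc, nonsing_inv_mul _ hdet, Matrix.mul_one]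

theorem smul_exp_mulVec_single_eq_single_iff {A U : Matrix m m 𝔸} {d : m → 𝔸} (hA : A.IsSymm)
    (hU : IsUnit U) (h : A * U = U * diagonal d) (c : 𝔸) (i j : m) :
    (c • exp A) *ᵥ Pi.single i 1 = Pi.single j 1 ↔ ∀ k, c * exp (d k) * U i k = U j k := by
  have hUT : Uᵀ * exp A = diagonal (exp d) * Uᵀ := by
    rw [← hA.exp, ← transpose_mul, exp_mul_eq_mul_diagonal_exp hU h, transpose_mul,
      diagonal_transpose]
  rw [← (mulVec_injective_of_isUnit ((isUnit_transpose U).mpr hU)).eq_iff, smul_mulVec,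
    mulVec_smul, mulVec_mulVec, hUT, ← mulVec_mulVec, mulVec_single_one, mulVec_single_one,
    funext_iff]
  simp [mulVec_diagonal, mul_assoc, Pi.coe_exp]

end Matrix

namespace Lagrange

theorem neg_one_pow_mul_eval_derivative_nodal_pos {n : ℕ} {v : Fin (n + 1) → ℝ}
    (hv : StrictMono v) (k : Fin (n + 1)) :
    0 < (-1) ^ (n + k : ℕ) * (derivative (nodal Finset.univ v)).eval (v k) := by
  rw [eval_nodal_derivative_eval_node_eq (Finset.mem_univ k), eval_nodal,
    ← Finset.compl_singleton, ← Finset.Ioi_disjUnion_Iio, Finset.prod_disjUnion]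
  have hIoi : ∏ j ∈ Finset.Ioi k, (v k - v j) =
      (-1) ^ (n - k : ℕ) * ∏ j ∈ Finset.Ioi k, (v j - v k) := by
    rw [Finset.prod_congr rfl fun j _ => (neg_sub (v j) (v k)).symm, Finset.prod_neg,
      Fin.card_Ioi, Nat.add_sub_cancel]
  have hsign : (-1 : ℝ) ^ (n + k : ℕ) * (-1) ^ (n - k : ℕ) = 1 := by
    rw [← pow_add, show n + k + (n - k) = 2 * n by omega, pow_mul, neg_one_sq, one_pow]
  have hpos₁ : 0 < ∏ j ∈ Finset.Ioi k, (v j - v k) :=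
    Finset.prod_pos fun j hj => sub_pos.mpr (hv (Finset.mem_Ioi.mp hj))
  have hpos₂ : 0 < ∏ j ∈ Finset.Iio k, (v k - v j) :=
    Finset.prod_pos fun j hj => sub_pos.mpr (hv (Finset.mem_Iio.mp hj))
  rw [hIoi, ← mul_assoc, ← mul_assoc, hsign, one_mul]
  exact mul_pos hpos₁ hpos₂

end Lagrange

theorem Complex.eq_ofReal_iff_of_norm_eq_one {w : ℂ} {x : ℝ} {n : ℕ} (hw : ‖w‖ = 1)
    (hx : 0 < (-1) ^ n * x) : w = x ↔ w = (-1) ^ n ∧ x = (-1) ^ n := by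
  refine ⟨fun h => ?_, fun h => by rw [h.1, h.2]; push_cast; rfl⟩
  have habs : |x| = 1 := by rw [← Real.norm_eq_abs, ← Complex.norm_real, ← h, hw]
  have hxn : x = (-1) ^ n := by
    rcases n.even_or_odd with hn | hn <;> rw [hn.neg_one_pow] at hx ⊢ <;>
      cases abs_eq (zero_le_one' ℝ) |>.mp habs <;> linarith
  exact ⟨by rw [h, hxn]; push_cast; rfl, hxn⟩

section Polynomials

variable (a b : ℕ → ℝ)

theorem phat_add_two (k : ℕ) : phat a b (k + 2) = C (b (k + 1))⁻¹ *
    ((X - C (a (k + 1))) * phat a b (k + 1) - C (b k) * phat a b k) := rfl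

variable {a b}

theorem C_mul_phat_succ {k : ℕ} (hk : b k ≠ 0) :
    C (b k) * phat a b (k + 1) =
      (X - C (a k)) * phat a b k - (if k = 0 then 0 else C (b (k - 1)) * phat a b (k - 1)) := by
  obtain _ | k := k
  · simp [phat, ← mul_assoc, ← C_mul, hk]
  · simp [phat_add_two, ← mul_assoc, ← C_mul, hk]

theorem mul_eval_phat_succ {k : ℕ} (hk : b k ≠ 0) (x : ℝ) :
    b k * (phat a b (k + 1)).eval x =
      (x - a k) * (phat a b k).eval x -
        (if k = 0 then 0 else b (k - 1) * (phat a b (k - 1)).eval x) := by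
  have := congrArg (eval x) (C_mul_phat_succ (a := a) hk)
  split_ifs at this ⊢ <;> simpa using this

variable (a b)

theorem natDegree_phat_le : ∀ n, (phat a b n).natDegree ≤ n
  | 0 => by simp [phat]
  | 1 => by simp only [phat]; compute_degree!
  | k + 2 => by
    have h₁ := natDegree_phat_le (k + 1)
    have h₀ := natDegree_phat_le k
    rw [phat_add_two]
    refine (natDegree_C_mul_le _ _).trans ((natDegree_sub_le _ _).trans (max_le ?_ ?_))
    · exact (natDegree_mul_le_of_le (natDegree_X_sub_C_le _) h₁).trans (by omega)
    · exact (natDegree_C_mul_le _ _).trans (by omega)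

theorem coeff_phat_self : ∀ n, (phat a b n).coeff n = ∏ j ∈ Finset.range n, (b j)⁻¹
  | 0 => by simp [phat]
  | 1 => by simp [phat]
  | k + 2 => by
    have h₁ : (phat a b (k + 1)).coeff (k + 2) = 0 :=
      coeff_eq_zero_of_natDegree_lt ((natDegree_phat_le a b _).trans_lt (by omega))
    have h₀ : (phat a b k).coeff (k + 2) = 0 :=
      coeff_eq_zero_of_natDegree_lt ((natDegree_phat_le a b _).trans_lt (by omega))
    rw [phat_add_two, coeff_C_mul, coeff_sub, sub_mul, coeff_sub, coeff_X_mul, coeff_C_mul,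
      coeff_C_mul, h₁, h₀, coeff_phat_self (k + 1), Finset.prod_range_succ _ (k + 1)]
    ring

theorem phat_christoffel_darboux {n : ℕ} (hb : ∀ j ≤ n, b j ≠ 0) :
    C (b n) * (derivative (phat a b (n + 1)) * phat a b n -
      derivative (phat a b n) * phat a b (n + 1)) =
      ∑ j ∈ Finset.range (n + 1), phat a b j ^ 2 := by
  induction n with
  | zero => simp [phat, ← mul_assoc, ← C_mul, hb 0 le_rfl]
  | succ m ih =>
    have hrec := C_mul_phat_succ (a := a) (hb (m + 1) le_rfl)
    have hrec' := congrArg derivative hrec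
    simp only [add_tsub_cancel_right, Nat.add_one_ne_zero, if_false, derivative_sub,
      derivative_mul, derivative_X, derivative_C, sub_zero, one_mul, zero_mul, zero_add]
      at hrec hrec'
    rw [Finset.sum_range_succ, ← ih fun j hj => hb j (by omega)]
    linear_combination phat a b (m + 1) * hrec' - derivative (phat a b (m + 1)) * hrec

end Polynomials

section Sign

variable {N : ℕ} {a b : ℕ → ℝ} {lam : Fin (N + 1) → ℝ}

theorem phat_succ_eq_C_mul_nodal (hlam : Function.Injective lam)
    (hroots : ∀ k, (phat a b (N + 1)).eval (lam k) = 0) :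
    phat a b (N + 1) =
      C (∏ j ∈ Finset.range (N + 1), (b j)⁻¹) * Lagrange.nodal Finset.univ lam := by
  have hnodal : (Lagrange.nodal Finset.univ lam).natDegree = N + 1 := by
    simp [Lagrange.natDegree_nodal]
  have hlead : (Lagrange.nodal Finset.univ lam).coeff (N + 1) = 1 := by
    simpa [hnodal] using (Lagrange.nodal_monic (s := Finset.univ) (v := lam)).coeff_natDegree
  refine Polynomial.eq_of_degree_sub_lt_of_eval_index_eq Finset.univ hlam.injOn ?_ fun k _ => ?_
  · rw [Finset.card_univ, Fintype.card_fin, degree_lt_iff_coeff_zero]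
    intro m hm
    rw [coeff_sub, coeff_C_mul]
    obtain rfl | hm := (show N + 1 ≤ m by exact_mod_cast hm).eq_or_lt
    · rw [coeff_phat_self, hlead, mul_one, sub_self]
    · rw [coeff_eq_zero_of_natDegree_lt ((natDegree_phat_le a b _).trans_lt hm),
        coeff_eq_zero_of_natDegree_lt (hnodal.trans_lt hm), mul_zero, sub_zero]
  · rw [hroots, eval_mul, Lagrange.eval_nodal_at_node (Finset.mem_univ k), mul_zero]

theorem neg_one_pow_mul_eval_phat_pos (hb : ∀ j ≤ N, 0 < b j) (hlam : StrictMono lam)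
    (hroots : ∀ k, (phat a b (N + 1)).eval (lam k) = 0) (k : Fin (N + 1)) :
    0 < (-1) ^ (N + k : ℕ) * (phat a b N).eval (lam k) := by
  have hD : 0 < (-1) ^ (N + k : ℕ) * (derivative (phat a b (N + 1))).eval (lam k) := by
    have hc : 0 < ∏ j ∈ Finset.range (N + 1), (b j)⁻¹ :=
      Finset.prod_pos fun j hj => inv_pos.mpr (hb j (Nat.lt_succ_iff.mp (Finset.mem_range.mp hj)))
    have hDeq : (derivative (phat a b (N + 1))).eval (lam k) =
        (∏ j ∈ Finset.range (N + 1), (b j)⁻¹) *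
          (derivative (Lagrange.nodal Finset.univ lam)).eval (lam k) := by
      rw [phat_succ_eq_C_mul_nodal hlam.injective hroots, derivative_C_mul, eval_mul, eval_C]
    rw [hDeq, mul_left_comm]
    exact mul_pos hc (Lagrange.neg_one_pow_mul_eval_derivative_nodal_pos hlam k)
  have hsum : 0 < ∑ j ∈ Finset.range (N + 1), (phat a b j).eval (lam k) ^ 2 :=
    Finset.sum_pos' (fun j _ => sq_nonneg _) ⟨0, by simp, by simp [phat]⟩
  have hcd := congrArg (eval (lam k)) (phat_christoffel_darboux a b fun j hj => (hb j hj).ne')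
  simp only [eval_mul, eval_C, eval_sub, eval_finsetSum, eval_pow, hroots k, mul_zero,
    sub_zero] at hcd
  rw [← hcd] at hsum
  have hsq : ((-1 : ℝ) ^ (N + k : ℕ)) ^ 2 = 1 := by
    rw [← pow_mul, mul_comm, pow_mul, neg_one_sq, one_pow]
  set D := (derivative (phat a b (N + 1))).eval (lam k)
  set P := (phat a b N).eval (lam k)
  refine (mul_pos_iff_of_pos_right (mul_pos (hb N le_rfl) hD)).mp ?_
  have : (-1) ^ (N + k : ℕ) * P * (b N * ((-1) ^ (N + k : ℕ) * D)) = b N * (D * P) := by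
    linear_combination hsq * (b N * D * P)
  rwa [this]

end Sign

theorem Fin.sum_ite_val_eq {M : Type*} [AddCommMonoid M] (n c : ℕ) (y : M) :
    ∑ j : Fin n, (if (j : ℕ) = c then y else 0) = if c < n then y else 0 := by
  simp [Fin.sum_univ_eq_sum_range (fun k => if k = c then y else 0)]

section JacobiMatrix

variable {N : ℕ} {a b : ℕ → ℝ}

theorem jacobiMatrix_isSymm : (jacobiMatrix N a b).IsSymm := by
  ext i j
  simp only [transpose_apply, jacobiMatrix, of_apply]
  split_ifs <;> grind

theorem jacobiMatrix_mulVec_apply (f : ℕ → ℝ) (i : Fin (N + 1)) :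
    (jacobiMatrix N a b *ᵥ fun j => f j) i =
      (if (i : ℕ) = 0 then 0 else b (i - 1) * f (i - 1)) + a i * f i +
        (if (i : ℕ) = N then 0 else b i * f (i + 1)) := by
  have hi := i.isLt
  have hsplit : ∀ n : ℕ,
      (if (i : ℕ) = n then a i else if (i : ℕ) + 1 = n then b i
        else if n + 1 = (i : ℕ) then b n else 0) * f n =
      (if n = i - 1 then (if (i : ℕ) = 0 then 0 else b (i - 1) * f (i - 1)) else 0) +
        (if n = i then a i * f i else 0) + (if n = i + 1 then b i * f (i + 1) else 0) := by
    intro n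
    split_ifs <;> first | (exfalso; omega) | (subst_vars; ring1)
  simp only [mulVec, dotProduct, jacobiMatrix, of_apply, hsplit, Finset.sum_add_distrib,
    Fin.sum_ite_val_eq]
  rw [if_pos (by omega : (i : ℕ) - 1 < N + 1), if_pos hi]
  congr 1
  split_ifs <;> first | rfl | omega

end JacobiMatrix

noncomputable def phatVec (N : ℕ) (a b : ℕ → ℝ) (x : ℝ) : Fin (N + 1) → ℝ :=
  fun j => (phat a b j).eval x

section Eigenvectors

variable {N : ℕ} {a b : ℕ → ℝ}

theorem jacobiMatrix_mulVec_phatVec (hb : ∀ j ≤ N, b j ≠ 0) (x : ℝ) :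
    jacobiMatrix N a b *ᵥ phatVec N a b x =
      x • phatVec N a b x - (b N * (phat a b (N + 1)).eval x) • Pi.single (Fin.last N) 1 := by
  ext i
  have hrec := mul_eval_phat_succ (a := a) (hb i (Nat.lt_succ_iff.mp i.isLt)) x
  unfold phatVec
  rw [jacobiMatrix_mulVec_apply (fun n => (phat a b n).eval x)]
  by_cases hi : i = Fin.last N
  · subst hi
    simp only [Fin.val_last, if_true, Pi.sub_apply, Pi.smul_apply, Pi.single_eq_same] at hrec ⊢
    linear_combination hrec
  · have hiN : (i : ℕ) ≠ N := fun h => hi (Fin.ext h)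
    simp only [hiN, if_false, Pi.sub_apply, Pi.smul_apply, Pi.single_eq_of_ne hi] at hrec ⊢
    linear_combination hrec

theorem eq_smul_phatVec_of_mulVec_eq_smul (hb : ∀ j < N, b j ≠ 0) {μ : ℝ}
    {w : Fin (N + 1) → ℝ} (hw : jacobiMatrix N a b *ᵥ w = μ • w) :
    w = w 0 • phatVec N a b μ := by
  set f : ℕ → ℝ := fun n => w (Fin.ofNat (N + 1) n)
  have hwf : w = fun j : Fin (N + 1) => f j := by simp [f]
  have hf : ∀ n ≤ N, f n = f 0 * (phat a b n).eval μ := by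
    intro n
    induction n using Nat.strong_induction_on with
    | _ n ih =>
      match n with
      | 0 => simp [phat]
      | m + 1 =>
        intro hm
        have hrow := congrFun hw ⟨m, by omega⟩
        rw [hwf, jacobiMatrix_mulVec_apply] at hrow
        have hrec := mul_eval_phat_succ (a := a) (hb m (by omega)) μ
        simp only [show m ≠ N by omega, if_false, Pi.smul_apply, smul_eq_mul] at hrow
        rw [ih m (by omega) (by omega)] at hrow
        apply mul_left_cancel₀ (hb m (by omega))
        split_ifs at hrow hrec with hm0
        · linear_combination hrow - f 0 * hrec
        · rw [ih (m - 1) (by omega) (by omega)] at hrow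
          linear_combination hrow - f 0 * hrec
  funext j
  simpa [phatVec, hwf] using hf j (Nat.lt_succ_iff.mp j.isLt)

theorem eval_phat_succ_eq_zero_of_isRoot_charpoly (hb : ∀ j ≤ N, b j ≠ 0) {μ : ℝ}
    (hμ : (jacobiMatrix N a b).charpoly.IsRoot μ) : (phat a b (N + 1)).eval μ = 0 := by
  have hμ' : Module.End.HasEigenvalue (toLin' (jacobiMatrix N a b)) μ := by
    rwa [Module.End.hasEigenvalue_iff_isRoot_charpoly, charpoly_toLin']
  obtain ⟨w, hw⟩ := hμ'.exists_hasEigenvector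
  have hwμ : jacobiMatrix N a b *ᵥ w = μ • w := by simpa using hw.apply_eq_smul
  have hwv := eq_smul_phatVec_of_mulVec_eq_smul (fun j hj => hb j hj.le) hwμ
  have hw0 : w 0 ≠ 0 := fun h => hw.2 (by rw [hwv, h, zero_smul])
  rw [hwv, mulVec_smul, jacobiMatrix_mulVec_phatVec hb] at hwμ
  have hlast := congrFun hwμ (Fin.last N)
  simp only [Pi.smul_apply, Pi.sub_apply, Pi.single_eq_same, smul_eq_mul] at hlast
  have : w 0 * b N * (phat a b (N + 1)).eval μ = 0 := by linear_combination -hlast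
  simpa [hw0, hb N le_rfl] using this

end Eigenvectors

noncomputable def phatMatrix (N : ℕ) (a b : ℕ → ℝ) (lam : Fin (N + 1) → ℝ) :
    Matrix (Fin (N + 1)) (Fin (N + 1)) ℝ :=
  of fun j k => phatVec N a b (lam k) j

section EigenvectorMatrix

variable {N : ℕ} {a b : ℕ → ℝ} {lam : Fin (N + 1) → ℝ}

theorem jacobiMatrix_mulVec_phatVec_of_eval_eq_zero (hb : ∀ j ≤ N, b j ≠ 0) {x : ℝ}
    (hx : (phat a b (N + 1)).eval x = 0) :
    jacobiMatrix N a b *ᵥ phatVec N a b x = x • phatVec N a b x := by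
  simpa [hx] using jacobiMatrix_mulVec_phatVec (a := a) hb x

theorem jacobiMatrix_mul_phatMatrix (hb : ∀ j ≤ N, b j ≠ 0)
    (hroots : ∀ k, (phat a b (N + 1)).eval (lam k) = 0) :
    jacobiMatrix N a b * phatMatrix N a b lam = phatMatrix N a b lam * diagonal lam := by
  ext i k
  rw [mul_diagonal]
  simpa [mul_apply, mulVec, dotProduct, phatMatrix, mul_comm] using
    congrFun (jacobiMatrix_mulVec_phatVec_of_eval_eq_zero hb (hroots k)) i

theorem isUnit_phatMatrix (hb : ∀ j ≤ N, b j ≠ 0) (hlam : Function.Injective lam)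
    (hroots : ∀ k, (phat a b (N + 1)).eval (lam k) = 0) : IsUnit (phatMatrix N a b lam) := by
  rw [← linearIndependent_cols_iff_isUnit]
  refine Module.End.eigenvectors_linearIndependent' (mulVecLin (jacobiMatrix N a b)) lam hlam
    (fun k => phatVec N a b (lam k)) fun k => ⟨?_, fun h => ?_⟩
  · rw [Module.End.mem_eigenspace_iff, mulVecLin_apply]
    exact jacobiMatrix_mulVec_phatVec_of_eval_eq_zero hb (hroots k)
  · simpa [phatVec, phat] using congrFun h 0

theorem smul_map_jacobiMatrix_mul_map_phatMatrix (hb : ∀ j ≤ N, b j ≠ 0)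
    (hroots : ∀ k, (phat a b (N + 1)).eval (lam k) = 0) (z : ℂ) :
    (z • (jacobiMatrix N a b).map (fun x => (x : ℂ))) * (phatMatrix N a b lam).map (↑) =
      (phatMatrix N a b lam).map (↑) * diagonal fun k => z * lam k := by
  have hmap := congrArg Complex.ofRealHom.mapMatrix (jacobiMatrix_mul_phatMatrix hb hroots)
  simp only [map_mul, RingHom.mapMatrix_apply, diagonal_map (map_zero _)] at hmap
  rw [Matrix.smul_mul]
  change z • ((jacobiMatrix N a b).map Complex.ofRealHom *
    (phatMatrix N a b lam).map Complex.ofRealHom) = _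
  rw [hmap, ← Matrix.mul_smul, ← diagonal_smul]
  rfl

end EigenvectorMatrix

theorem stmt_17_general (N : ℕ) (a b : ℕ → ℝ)
    (hb : ∀ j < N, 0 < b j) (hbN : b N = 1)
    (lam : Fin (N + 1) → ℝ) (hmono : StrictMono lam)
    (heig : (jacobiMatrix N a b).charpoly = ∏ i : Fin (N + 1), (X - C (lam i)))
    (φ T : ℝ) :
    (Complex.exp (φ * Complex.I) •
        exp ((T * Complex.I) •
          ((jacobiMatrix N a b).map (fun x => (x : ℂ))))).mulVec
        (Pi.single 0 1) = Pi.single (Fin.last N) 1 ↔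
      ((∀ k : Fin (N + 1),
          Complex.exp ((T * lam k + φ) * Complex.I) = (-1) ^ (N + (k : ℕ))) ∧
        (∀ k : Fin (N + 1),
          (phat a b N).eval (lam k) = (-1) ^ (N + (k : ℕ)))) := by
  have hbpos : ∀ j ≤ N, 0 < b j := fun j hj =>
    hj.lt_or_eq.elim (hb j) fun h => h ▸ hbN ▸ one_pos
  have hbne : ∀ j ≤ N, b j ≠ 0 := fun j hj => (hbpos j hj).ne'
  have hroots : ∀ k, (phat a b (N + 1)).eval (lam k) = 0 := fun k =>
    eval_phat_succ_eq_zero_of_isRoot_charpoly hbne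
      (by simp [heig, IsRoot, eval_prod, Finset.prod_eq_zero_iff, sub_eq_zero])
  set V := (phatMatrix N a b lam).map ((↑) : ℝ → ℂ)
  have hV : IsUnit V :=
    (isUnit_phatMatrix hbne hmono.injective hroots).map (Complex.ofRealHom.mapMatrix)
  rw [smul_exp_mulVec_single_eq_single_iff (jacobiMatrix_isSymm.map _ |>.smul _) hV
    (smul_map_jacobiMatrix_mul_map_phatMatrix hbne hroots _), ← forall_and]
  refine forall_congr' fun k => ?_
  have hexp : Complex.exp (φ * Complex.I) * exp (T * Complex.I * lam k) =
      Complex.exp ((T * lam k + φ) * Complex.I) := by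
    rw [← Complex.exp_eq_exp_ℂ, ← Complex.exp_add]
    ring_nf
  simp only [V, map_apply, phatMatrix, of_apply, phatVec, Fin.val_zero, phat, eval_one,
    Complex.ofReal_one, mul_one, Fin.val_last, hexp]
  exact Complex.eq_ofReal_iff_of_norm_eq_one (by exact_mod_cast Complex.norm_exp_ofReal_mul_I _)
    (neg_one_pow_mul_eval_phat_pos hbpos hmono hroots k)

/-- **Characterization of perfect quantum state transfer.** For a Jacobi matrix `H`
    with eigenvalues `λ_0 < ... < λ_N` and `φ ∈ ℝ`, `T > 0`, the perfect state transfer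
    condition `e^{iφ} e^{iTH} e_0 = e_N` holds iff
    (i) `e^{i(Tλ_k + φ)} = (-1)^{N+k}` for all `k`, and
    (ii) `P̂_N(λ_k) = (-1)^{N+k}` for all `k`. -/
theorem stmt_17 (N : ℕ) (a b : ℕ → ℝ)
    (hb : ∀ j < N, 0 < b j) (hbN : b N = 1)
    (lam : Fin (N + 1) → ℝ) (hmono : StrictMono lam)
    (heig : (jacobiMatrix N a b).charpoly = ∏ i : Fin (N + 1), (X - C (lam i)))
    (φ T : ℝ) (hT : 0 < T) :
    (Complex.exp (φ * Complex.I) •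
        exp ((T * Complex.I) •
          ((jacobiMatrix N a b).map (fun x => (x : ℂ))))).mulVec
        (Pi.single 0 1) = Pi.single (Fin.last N) 1 ↔
      ((∀ k : Fin (N + 1),
          Complex.exp ((T * lam k + φ) * Complex.I) = (-1) ^ (N + (k : ℕ))) ∧
        (∀ k : Fin (N + 1),
          (phat a b N).eval (lam k) = (-1) ^ (N + (k : ℕ)))) :=
  stmt_17_general N a b hb hbN lam hmono heig φ T
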